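/- Let A ∈ X_m⁺, γ̃ ∈ Λ⁺_{n,2ℓ}, i = #{j : γ̃_j = 2ℓ}, and let a_i be the constant from the asymptotic ratio lemma. If i = 0, then P_{γ̃}(A;X) − a₀ · Σ_{r≥1} (q^{n(2n−2m−1)}X)^r is a polynomial in X; in particular (1 − q^{n(2n−2m−1)}X) · P_{γ̃}(A;X) is a polynomial in X. If 1 ≤ i ≤ n, then P_{γ̃}(A;X) − a_i · Σ_{r≥1} (q^{n(2n−2m−1)+i(2i−2m+1)}X)^r Σ_{ρ ∈ Λ⁺_{i,2r}} 𝒮_r(A,π^ρ)/N_r^{pr}(π^ρ,π^ρ) is a polynomial in X. -/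

import Mathlib

/- Common setup: quaternion hermitian forms over a p-adic field, following
   Hironaka, "Local densities of p-adic quaternion hermitian forms". -/

open scoped Quaternion
open MeasureTheory Matrix

noncomputable section

namespace QH

open scoped Classical

/-- A measurable space structure on matrices (entrywise product σ-algebra). -/
instance matMS {a b D : Type} [MeasurableSpace D] : MeasurableSpace (Matrix a b D) :=
  MeasurableSpace.pi

variable {K : Type} [Field K] (O : Subring K) (ε πk : K)

/-- The element Π of the quaternion algebra `D = ℍ[K, ε, π]`. -/
def Pel : ℍ[K, ε, πk] := ⟨0, 0, 1, 0⟩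

/-- The canonical embedding of `K` into `D`. -/
def iota (a : K) : ℍ[K, ε, πk] := algebraMap K ℍ[K, ε, πk] a

/-- Reduced trace, as an element of `D` (it is a scalar). -/
def TrdD (x : ℍ[K, ε, πk]) : ℍ[K, ε, πk] := x + star x

/-- Reduced trace, as an element of `K`. -/
def TrdK (x : ℍ[K, ε, πk]) : K := (x + star x).re

/-- Reduced norm, as an element of `K`. -/
def NrdK (x : ℍ[K, ε, πk]) : K := (x * star x).re

/-- The maximal order `𝒪_D` of `D`: quaternions with all coordinates in `O`. -/
def ODset : Set ℍ[K, ε, πk] :=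
  {x | x.re ∈ O ∧ x.imI ∈ O ∧ x.imJ ∈ O ∧ x.imK ∈ O}

/-- The set `𝒫^j = Π^j 𝒪_D`. -/
def PSet (j : ℕ) : Set ℍ[K, ε, πk] :=
  {x | ∃ y ∈ ODset O ε πk, x = Pel ε πk ^ j * y}

/-- The set `π^ℓ 𝒪_D`. -/
def modSet (ℓ : ℕ) : Set ℍ[K, ε, πk] :=
  {x | ∃ y ∈ ODset O ε πk, x = iota ε πk (πk ^ ℓ) * y}

/-- The set `𝔭^ℓ = π^ℓ 𝒪 ⊆ K`. -/
def pSetK (ℓ : ℕ) : Set K := {c | ∃ u ∈ O, c = πk ^ ℓ * u}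

/-- `Π^b` for an arbitrary integer `b` (`Π^b = π^{(b - b%2)/2} Π^{b%2}`). -/
def PelZ (b : ℤ) : ℍ[K, ε, πk] :=
  iota ε πk (πk ^ ((b - b % 2) / 2)) * Pel ε πk ^ (b % 2).toNat

section Matrices

variable {ιm ιn a b : Type} [Fintype ιm] [Fintype ιn] [Fintype a] [Fintype b]
  [DecidableEq a] [DecidableEq b]

/-- A matrix is integral if all entries lie in `𝒪_D`. -/
def inOD (A : Matrix a b ℍ[K, ε, πk]) : Prop := ∀ i j, A i j ∈ ODset O ε πk

/-- Congruence of matrices modulo `π^ℓ 𝒪_D` (entrywise). -/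
def matMod (ℓ : ℕ) (v w : Matrix a b ℍ[K, ε, πk]) : Prop :=
  ∀ i j, v i j - w i j ∈ modSet O ε πk ℓ

/-- The condition on `v` entering the local density count:
`v` integral and `A[v] - B ≡ 0 (mod π^ℓ 𝒪_D)`. -/
def densCond (A : Matrix ιm ιm ℍ[K, ε, πk]) (B : Matrix ιn ιn ℍ[K, ε, πk]) (ℓ : ℕ)
    (v : Matrix ιm ιn ℍ[K, ε, πk]) : Prop :=
  inOD O ε πk v ∧ ∀ i j, (vᴴ * A * v - B) i j ∈ modSet O ε πk ℓ

/-- The number of residue classes `v̄ ∈ M_{m,n}(𝒪_D/π^ℓ𝒪_D)` with `A[v] ≡ B`. -/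
def Ncount (A : Matrix ιm ιm ℍ[K, ε, πk]) (B : Matrix ιn ιn ℍ[K, ε, πk]) (ℓ : ℕ) : ℕ :=
  Nat.card (Quot fun v w : {v : Matrix ιm ιn ℍ[K, ε, πk] // densCond O ε πk A B ℓ v} =>
    matMod O ε πk ℓ v.1 w.1)

/-- The ratio whose limit is the local density `μ(B, A)`. -/
def densRatio (q : ℕ) (A : Matrix ιm ιm ℍ[K, ε, πk]) (B : Matrix ιn ιn ℍ[K, ε, πk])
    (ℓ : ℕ) : ℚ :=
  (Ncount O ε πk A B ℓ : ℚ) /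
    (q : ℚ) ^ ((ℓ : ℤ) * (Fintype.card ιn) *
      (4 * (Fintype.card ιm : ℤ) - 2 * (Fintype.card ιn : ℤ) - 1))

/-- The local density `μ(B, A)` of representations of `B` by `A`
(for integral `A`, `B`): the eventual (stable) value of `densRatio`. -/
def mu (q : ℕ) (A : Matrix ιm ιm ℍ[K, ε, πk]) (B : Matrix ιn ιn ℍ[K, ε, πk]) : ℚ :=
  if h : ∃ c : ℚ, ∀ᶠ ℓ in Filter.atTop, densRatio O ε πk q A B ℓ = c then h.choose else 0

/-- Scaling a matrix by `π^e`. -/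
def scaleMat (e : ℕ) (A : Matrix a b ℍ[K, ε, πk]) : Matrix a b ℍ[K, ε, πk] :=
  fun i j => iota ε πk (πk ^ e) * A i j

/-- Local density extended to non-integral forms by the scaling rule
`μ(π^e B, π^e A) = q^{e n (2n-1)} μ(B, A)`. -/
def muExt (q : ℕ) (A : Matrix ιm ιm ℍ[K, ε, πk]) (B : Matrix ιn ιn ℍ[K, ε, πk]) : ℚ :=
  if h : ∃ e : ℕ, inOD O ε πk (scaleMat ε πk e A) ∧ inOD O ε πk (scaleMat ε πk e B) then
    (q : ℚ) ^ (-((h.choose : ℤ) * (Fintype.card ιn) * (2 * (Fintype.card ιn : ℤ) - 1))) *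
      mu O ε πk q (scaleMat ε πk h.choose A) (scaleMat ε πk h.choose B)
  else 0

/-- The pairing `⟨A, B⟩ = Σ_i A_{ii} B_{ii} + Σ_{i<j} Trd(A_{ij} B_{ji})`,
as an element of `D` (for hermitian matrices it is a scalar). -/
def pairD [LinearOrder ιn] (A B : Matrix ιn ιn ℍ[K, ε, πk]) : ℍ[K, ε, πk] :=
  (∑ i, A i i * B i i) +
    ∑ p ∈ Finset.univ.filter (fun p : ιn × ιn => p.1 < p.2),
      TrdD ε πk (A p.1 p.2 * B p.2 p.1)

/-- The pairing, as an element of `K`. -/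
def pairK [LinearOrder ιn] (A B : Matrix ιn ιn ℍ[K, ε, πk]) : K :=
  (pairD ε πk A B).re

/-- Product (Haar) measure on matrices over `D`. -/
def matVol [MeasurableSpace ℍ[K, ε, πk]] (μD : Measure ℍ[K, ε, πk]) :
    Measure (Matrix ιm ιn ℍ[K, ε, πk]) :=
  Measure.pi fun _ : ιm => Measure.pi fun _ : ιn => μD

/-- The Gauss sum `𝒢(A, C) = ∫_{M_{m,n}(𝒪_D)} ψ(⟨A[v], C⟩) dv`. -/
def gauss [MeasurableSpace ℍ[K, ε, πk]] (μD : Measure ℍ[K, ε, πk]) (ψ : AddChar K ℂ)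
    [LinearOrder ιn] (A : Matrix ιm ιm ℍ[K, ε, πk]) (C : Matrix ιn ιn ℍ[K, ε, πk]) : ℂ :=
  ∫ v in {v : Matrix ιm ιn ℍ[K, ε, πk] | inOD O ε πk v},
    ψ (pairK ε πk (vᴴ * A * v) C) ∂(matVol ε πk μD)

/-- The 2×2 block `h^r = [[0, Π^r], [(-Π)^r, 0]]`. -/
def hBlock (r : ℕ) : Matrix (Fin 2) (Fin 2) ℍ[K, ε, πk] :=
  !![0, Pel ε πk ^ r; (-Pel ε πk) ^ r, 0]

/-- The form `H^λ = h^{λ_1} ⊥ ⋯ ⊥ h^{λ_κ}`. -/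
def Hlam {κ : ℕ} (lam : Fin κ → ℕ) :
    Matrix (Fin 2 × Fin κ) (Fin 2 × Fin κ) ℍ[K, ε, πk] :=
  Matrix.blockDiagonal fun i => hBlock ε πk (lam i)

/-- Orthogonal (block-diagonal) sum of two forms. -/
def osum (A : Matrix a a ℍ[K, ε, πk]) (S : Matrix b b ℍ[K, ε, πk]) :
    Matrix (a ⊕ b) (a ⊕ b) ℍ[K, ε, πk] :=
  Matrix.fromBlocks A 0 0 S

/-- A matrix `g` lies in `GL(𝒪_D)`. -/
def inGL (g : Matrix a a ℍ[K, ε, πk]) : Prop :=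
  inOD O ε πk g ∧ ∃ h : Matrix a a ℍ[K, ε, πk], inOD O ε πk h ∧ g * h = 1 ∧ h * g = 1

/-- Elementary divisors: `x = g · diag(Π^{d_1}, …, Π^{d_n}) · h` with `g, h ∈ GL(𝒪_D)`. -/
def hasElemDiv {n : ℕ} (x : Matrix (Fin n) (Fin n) ℍ[K, ε, πk]) (d : Fin n → ℤ) : Prop :=
  ∃ g h, inGL O ε πk g ∧ inGL O ε πk h ∧
    x = g * Matrix.diagonal (fun i => PelZ ε πk (d i)) * h

end Matrices

section Partitions

variable {κ n : ℕ}

/-- `λ̂_i = #{j : λ_j ≥ i}`. -/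
def hatP (lam : Fin κ → ℕ) (i : ℕ) : ℕ := (Finset.univ.filter fun j => i ≤ lam j).card

/-- `⟨λ̂, τ̂⟩ = Σ_{i=1}^{ℓ} λ̂_i τ̂_i`. -/
def pairHat (ℓ : ℕ) (lam : Fin κ → ℕ) (tau : Fin n → ℕ) : ℕ :=
  ∑ i ∈ Finset.Icc 1 ℓ, hatP lam i * hatP tau i

/-- `Γ_{κ,ℓ}`: nonincreasing tuples bounded by `ℓ`. -/
def Gam (ℓ : ℕ) (lam : Fin κ → ℕ) : Prop := Antitone lam ∧ ∀ j, lam j ≤ ℓ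

/-- `Λ_n⁺`: nonincreasing tuples in which every odd value occurs with even multiplicity. -/
def LamP (γ : Fin n → ℕ) : Prop :=
  Antitone γ ∧ ∀ v : ℕ, Odd v → Even (Finset.univ.filter fun j => γ j = v).card

/-- `Λ⁺_{n,b}`. -/
def LamPLe (b : ℕ) (γ : Fin n → ℕ) : Prop := LamP γ ∧ ∀ j, γ j ≤ b

/-- Position of `i` within its run of equal values. -/
def runpos (γ : Fin n → ℕ) (i : Fin n) : ℕ :=
  (Finset.univ.filter fun l => l < i ∧ γ l = γ i).card

end Partitions

section Forms

variable {n : ℕ}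

/-- The standard form `π^γ` attached to `γ ∈ Λ_n⁺`: each even part `2e` contributes a
diagonal entry `π^e = Π^{2e}` and each pair of equal odd parts `2e+1` contributes a
block `[[0, π^e Π], [-π^e Π, 0]]`. -/
def piGamma (γ : Fin n → ℕ) : Matrix (Fin n) (Fin n) ℍ[K, ε, πk] := fun i j =>
  if Even (γ i) then (if j = i then Pel ε πk ^ γ i else 0)
  else if runpos γ i % 2 = 0 then
    (if (j : ℕ) = (i : ℕ) + 1 then Pel ε πk ^ γ i else 0)
  else (if (j : ℕ) + 1 = (i : ℕ) then -(Pel ε πk ^ γ i) else 0)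

/-- The standard shape with `r` diagonal entries `⟨Π^{α_i}⟩` followed by `s` blocks
`[[0, Π^α], [-Π^α, 0]]` (exponents in `ℤ`). -/
def stdMat (r : ℕ) {m : ℕ} (α : Fin m → ℤ) : Matrix (Fin m) (Fin m) ℍ[K, ε, πk] :=
  fun i j =>
    if (i : ℕ) < r then (if j = i then PelZ ε πk (α i) else 0)
    else if ((i : ℕ) - r) % 2 = 0 then
      (if (j : ℕ) = (i : ℕ) + 1 then PelZ ε πk (α i) else 0)
    else (if (j : ℕ) + 1 = (i : ℕ) then -(PelZ ε πk (α i)) else 0)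

end Forms

section FiniteSums

variable {ιm : Type} [Fintype ιm] {n : ℕ}

/-- A representative of a class in a `Quot`. -/
def qout {α : Sort*} {r : α → α → Prop} (w : Quot r) : α := (Quot.exists_rep w).choose

/-- The finite Gauss sum
`𝒮_ℓ(A, C) = Σ_{v̄ ∈ M_{m,n}(𝒪_D/π^ℓ𝒪_D)} χ_ℓ(⟨A[v], C⟩)`. -/
def Sgauss (ψ : AddChar K ℂ) (ℓ : ℕ) (A : Matrix ιm ιm ℍ[K, ε, πk])
    (C : Matrix (Fin n) (Fin n) ℍ[K, ε, πk]) : ℂ :=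
  ∑' w : Quot (fun v u : {v : Matrix ιm (Fin n) ℍ[K, ε, πk] // inOD O ε πk v} =>
      matMod O ε πk ℓ v.1 u.1),
    ψ (πk⁻¹ ^ ℓ * pairK ε πk ((qout w).1ᴴ * A * (qout w).1) C)

/-- Membership in `V_n(π, ℓ)`: diagonal entries in `𝔭^ℓ`, off-diagonal in `𝒫^{2ℓ-1}`. -/
def VnplCond (ℓ : ℕ) (y : Matrix (Fin n) (Fin n) ℍ[K, ε, πk]) : Prop :=
  (∀ i, ∃ c ∈ pSetK O πk ℓ, y i i = iota ε πk c) ∧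
    ∀ i j, i ≠ j → y i j ∈ PSet O ε πk (2 * ℓ - 1)

/-- `N_ℓ(B, A) = #{v̄ : A[v] - B ∈ V_n(π, ℓ)}`. -/
def Nell (A : Matrix ιm ιm ℍ[K, ε, πk]) (B : Matrix (Fin n) (Fin n) ℍ[K, ε, πk])
    (ℓ : ℕ) : ℕ :=
  Nat.card (Quot fun v w : {v : Matrix ιm (Fin n) ℍ[K, ε, πk] //
      inOD O ε πk v ∧ VnplCond O ε πk ℓ (vᴴ * A * v - B)} =>
    matMod O ε πk ℓ v.1 w.1)

/-- `g` is invertible modulo `π^ℓ 𝒪_D`. -/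
def GLmodCond (ℓ : ℕ) (g : Matrix (Fin n) (Fin n) ℍ[K, ε, πk]) : Prop :=
  inOD O ε πk g ∧ ∃ h : Matrix (Fin n) (Fin n) ℍ[K, ε, πk], inOD O ε πk h ∧
    (∀ i j, (g * h - 1) i j ∈ modSet O ε πk ℓ) ∧
    (∀ i j, (h * g - 1) i j ∈ modSet O ε πk ℓ)

/-- `N_ℓ^{pr}(C, C) = #{ḡ ∈ GL_n(𝒪_D/π^ℓ𝒪_D) : C[g] - C ∈ V_n(π, ℓ)}`. -/
def Npr (Cm : Matrix (Fin n) (Fin n) ℍ[K, ε, πk]) (ℓ : ℕ) : ℕ :=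
  Nat.card (Quot fun g h : {g : Matrix (Fin n) (Fin n) ℍ[K, ε, πk] //
      GLmodCond O ε πk ℓ g ∧ VnplCond O ε πk ℓ (gᴴ * Cm * g - Cm)} =>
    matMod O ε πk ℓ g.1 h.1)

/-- The orbit `K_n · B = {g B g* : g ∈ GL_n(𝒪_D)}`. -/
def orbitSet (B : Matrix (Fin n) (Fin n) ℍ[K, ε, πk]) :
    Set (Matrix (Fin n) (Fin n) ℍ[K, ε, πk]) :=
  {z | ∃ g, inGL O ε πk g ∧ z = g * B * gᴴ}

/-- The Fourier transform `(ch_B)^∧_ℓ(C) = ∫_{K_n·B} ψ_ℓ(-⟨z, C⟩) dz`. -/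
def chHat [MeasurableSpace ℍ[K, ε, πk]]
    (μV : Measure (Matrix (Fin n) (Fin n) ℍ[K, ε, πk])) (ψ : AddChar K ℂ) (ℓ : ℕ)
    (B C : Matrix (Fin n) (Fin n) ℍ[K, ε, πk]) : ℂ :=
  ∫ z in orbitSet O ε πk B, ψ (πk⁻¹ ^ ℓ * (-pairK ε πk z C)) ∂μV

/-- `ℓ` is admissible for `B`:
the orbit `K_n·B` is a union of cosets modulo `V_n ∩ M_n(π^ℓ 𝒪_D)`. -/
def admissible (ℓ : ℕ) (B : Matrix (Fin n) (Fin n) ℍ[K, ε, πk]) : Prop :=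
  ∀ z ∈ orbitSet O ε πk B, ∀ y : Matrix (Fin n) (Fin n) ℍ[K, ε, πk],
    y.IsHermitian → (∀ i j, y i j ∈ modSet O ε πk ℓ) → z + y ∈ orbitSet O ε πk B

/-- The Kitaoka series `P(B, A; X) = Σ_{r ≥ 0} μ(π^r B, A) X^r`. -/
def kitaoka {ιn : Type} [Fintype ιn] (q : ℕ) (A : Matrix ιm ιm ℍ[K, ε, πk])
    (B : Matrix ιn ιn ℍ[K, ε, πk]) : PowerSeries ℚ :=
  PowerSeries.mk fun r => muExt O ε πk q A (scaleMat ε πk r B)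

/-- The quotient `𝒮_ℓ(A, π^γ) / N_ℓ^{pr}(π^γ, π^γ)`. -/
def ratioSN (ψ : AddChar K ℂ) (A : Matrix ιm ιm ℍ[K, ε, πk]) (γ : Fin n → ℕ)
    (ℓ : ℕ) : ℂ :=
  Sgauss O ε πk ψ ℓ A (piGamma ε πk γ) / (Npr O ε πk (piGamma ε πk γ) ℓ : ℂ)

/-- `Λ(γ̃, r)` defined by the congruence condition `γ ≡ γ̃ (mod 2ℓ)`. -/
def LamSetMod (ℓ : ℕ) (γt : Fin n → ℕ) (r : ℕ) : Set (Fin n → ℕ) :=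
  {γ | LamPLe (2 * (ℓ + r)) γ ∧ ∀ j, Nat.ModEq (2 * ℓ) (γ j) (γt j)}

/-- `Λ(γ̃, r)` defined by the explicit description: `{γ̃}` if `i = 0`, and
`{((2ℓ)^i + ρ, v) : ρ ∈ Λ⁺_{i,2r}}` if `i ≥ 1`. -/
def LamSetExp (ℓ : ℕ) (γt : Fin n → ℕ) (i : ℕ) (r : ℕ) : Set (Fin n → ℕ) :=
  if i = 0 then {γt}
  else {γ | LamPLe (2 * (ℓ + r)) γ ∧ ∃ ρ : Fin i → ℕ, LamPLe (2 * r) ρ ∧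
    ∀ j : Fin n, (∀ hj : (j : ℕ) < i, γ j = 2 * ℓ + ρ ⟨j, hj⟩) ∧
      (i ≤ (j : ℕ) → γ j = γt j)}

/-- The partial Kitaoka series
`P_{γ̃}(A; X) = Σ_{r≥0} (q^{4n(n-m)} X)^r Σ_{γ ∈ Λ(γ̃,r)} 𝒮_{ℓ+r}(A,π^γ)/N^{pr}_{ℓ+r}(π^γ,π^γ)`,
with respect to a given family of index sets `Λ(γ̃, ·)`. -/
def Pgamma (q : ℕ) (ψ : AddChar K ℂ) (A : Matrix ιm ιm ℍ[K, ε, πk])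
    (Lam : ℕ → Set (Fin n → ℕ)) (ℓ : ℕ) : PowerSeries ℂ :=
  PowerSeries.mk fun r =>
    ((q : ℂ) ^ (4 * (n : ℤ) * ((n : ℤ) - (Fintype.card ιm : ℤ)))) ^ r *
      ∑' γ : (Lam r), ratioSN O ε πk ψ A γ.1 (ℓ + r)

end FiniteSums

/-- A power series is a polynomial. -/
def IsPolySeries {R : Type} [CommSemiring R] (f : PowerSeries R) : Prop :=
  ∃ p : Polynomial R, f = (p : PowerSeries R)

end QH

open QH in
private lemma isPoly_of_eventually_zero {f : PowerSeries ℂ} {N : ℕ}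
    (h : ∀ r, N ≤ r → PowerSeries.coeff r f = 0) : IsPolySeries f := by
  refine ⟨f.trunc N, ?_⟩
  ext r
  rw [Polynomial.coeff_coe, PowerSeries.coeff_trunc]
  split
  · rfl
  · exact h r (le_of_not_gt (by assumption))

open QH in
private lemma isPoly_mul' {f g : PowerSeries ℂ} (hf : IsPolySeries f) (hg : IsPolySeries g) :
    IsPolySeries (f * g) := by
  obtain ⟨p, rfl⟩ := hf; obtain ⟨p', rfl⟩ := hg
  exact ⟨p * p', (Polynomial.coe_mul p p').symm⟩

open QH in
private lemma isPoly_add' {f g : PowerSeries ℂ} (hf : IsPolySeries f) (hg : IsPolySeries g) :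
    IsPolySeries (f + g) := by
  obtain ⟨p, rfl⟩ := hf; obtain ⟨p', rfl⟩ := hg
  exact ⟨p + p', by push_cast; ring⟩

private lemma zpow_pow_combine {x : ℂ} (hx : x ≠ 0) (e₁ e₂ e₃ : ℤ) (r : ℕ)
    (h : e₁ * r + e₂ = e₃ * r) : (x ^ e₁) ^ r * x ^ e₂ = (x ^ e₃) ^ r := by
  rw [← zpow_natCast (x ^ e₁) r, ← _root_.zpow_mul, ← zpow_natCast (x ^ e₃) r, ← _root_.zpow_mul,
    ← zpow_add₀ hx]
  congr 1

open QH in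
/-- up to polynomials, the partial Kitaoka series `P_{γ̃}(A;X)` equals
`a₀ Σ_{r≥1}(q^{n(2n-2m-1)}X)^r` if `i = 0` (so `(1 - q^{n(2n-2m-1)}X) P_{γ̃}` is a
polynomial), and equals
`a_i Σ_{r≥1}(q^{n(2n-2m-1)+i(2i-2m+1)}X)^r Σ_{ρ ∈ Λ⁺_{i,2r}} 𝒮_r(A,π^ρ)/N_r^{pr}(π^ρ,π^ρ)`
if `1 ≤ i ≤ n`. -/
theorem Pgamma_up_to_polynomial
    {K : Type} [Field K] (O : Subring K) (ε πk : K) (q : ℕ)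
    [IsDiscreteValuationRing ↥O] [IsFractionRing ↥O K]
    [IsAdicComplete (IsLocalRing.maximalIdeal ↥O) ↥O]
    (hπO : πk ∈ O)
    (hπ : Ideal.span {(⟨πk, hπO⟩ : ↥O)} = IsLocalRing.maximalIdeal ↥O)
    (hq : Nat.card (IsLocalRing.ResidueField ↥O) = q) (hodd : Odd q)
    (hεO : ε ∈ O) (hεu : IsUnit (⟨ε, hεO⟩ : ↥O))
    (hεns : ¬ ∃ y : IsLocalRing.ResidueField ↥O,
      y ^ 2 = IsLocalRing.residue ↥O ⟨ε, hεO⟩)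
    (ψ : AddChar K ℂ) (hψ1 : ∀ x : K, x ∈ O → ψ x = 1)
    (hψ2 : ∃ x : K, πk * x ∈ O ∧ ψ x ≠ 1)
    {m n : ℕ}
    (A : Matrix (Fin m) (Fin m) ℍ[K, ε, πk])
    (hA : A.IsHermitian) (hAu : IsUnit A) (hAint : inOD O ε πk A)
    (ℓ : ℕ) (hℓ : 1 ≤ ℓ)
    (γt : Fin n → ℕ) (hγt : LamPLe (2 * ℓ) γt)
    (i : ℕ) (hi : i = (Finset.univ.filter fun j => γt j = 2 * ℓ).card)
    (hin : i ≤ n)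
    -- `a` is the constant from the asymptotic ratio lemma:
    (a : ℚ) (r₀ : ℕ)
    (ha : ∀ r : ℕ, r₀ ≤ r →
      ∀ γ : Fin n → ℕ, γ ∈ LamSetExp ℓ γt i r →
        (i = 0 →
          ratioSN O ε πk ψ A γ (ℓ + r) =
            (a : ℂ) * (q : ℂ) ^ ((r : ℤ) * n * (2 * m - 2 * n - 1))) ∧
        (1 ≤ i →
          ratioSN O ε πk ψ A γ (ℓ + r) =
            (a : ℂ) *
              (q : ℂ) ^ ((r : ℤ) * ((n : ℤ) - i) * (2 * m - 2 * n - 2 * i - 1)) *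
              ratioSN O ε πk ψ A
                (fun j : Fin i => γ (Fin.castLE hin j) - 2 * ℓ) r)) :
    (i = 0 →
      IsPolySeries
        (Pgamma O ε πk q ψ A (LamSetExp ℓ γt i) ℓ -
          PowerSeries.C (R := ℂ) (a : ℂ) *
            PowerSeries.mk (fun r => if r = 0 then (0 : ℂ) else
              ((q : ℂ) ^ ((n : ℤ) * (2 * n - 2 * m - 1))) ^ r)) ∧
      IsPolySeries
        ((1 - PowerSeries.C (R := ℂ) ((q : ℂ) ^ ((n : ℤ) * (2 * n - 2 * m - 1))) *
            PowerSeries.X) *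
          Pgamma O ε πk q ψ A (LamSetExp ℓ γt i) ℓ)) ∧
    (1 ≤ i →
      IsPolySeries
        (Pgamma O ε πk q ψ A (LamSetExp ℓ γt i) ℓ -
          PowerSeries.C (R := ℂ) (a : ℂ) *
            PowerSeries.mk (fun r => if r = 0 then (0 : ℂ) else
              ((q : ℂ) ^ ((n : ℤ) * (2 * n - 2 * m - 1) + (i : ℤ) * (2 * i - 2 * m + 1))) ^ r *
                ∑' ρ : {ρ : Fin i → ℕ // LamPLe (2 * r) ρ},
                  ratioSN O ε πk ψ A ρ.1 r))) := by

  have hq0 : (q : ℂ) ≠ 0 := by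
    have hqz : q ≠ 0 := by rcases hodd with ⟨k, hk⟩; omega
    exact_mod_cast hqz
  constructor
  · -- case i = 0
    intro hi0
    subst hi0
    have hset : ∀ r : ℕ, LamSetExp ℓ γt 0 r = ({γt} : Set (Fin n → ℕ)) := by
      intro r; unfold LamSetExp; simp
    have hmem0 : ∀ r : ℕ, γt ∈ LamSetExp ℓ γt 0 r := by
      intro r; rw [hset r]; exact rfl
    have key1 : IsPolySeries
        (Pgamma O ε πk q ψ A (LamSetExp ℓ γt 0) ℓ -
          PowerSeries.C (R := ℂ) (a : ℂ) *
            PowerSeries.mk (fun r => if r = 0 then (0 : ℂ) else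
              ((q : ℂ) ^ ((n : ℤ) * (2 * n - 2 * m - 1))) ^ r)) := by
      apply isPoly_of_eventually_zero (N := r₀ + 1)
      intro r hr
      have hrne : r ≠ 0 := by omega
      have hr0 : r₀ ≤ r := by omega
      simp only [map_sub, PowerSeries.coeff_C_mul, Pgamma, PowerSeries.coeff_mk,
        Fintype.card_fin, if_neg hrne]
      rw [hset r, tsum_singleton γt (fun x => ratioSN O ε πk ψ A x (ℓ + r))]
      rw [(ha r hr0 γt (hmem0 r)).1 rfl]
      have hcomb := zpow_pow_combine hq0 (4 * (n : ℤ) * ((n : ℤ) - (m : ℤ)))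
        ((r : ℤ) * (n : ℤ) * (2 * (m : ℤ) - 2 * (n : ℤ) - 1))
        ((n : ℤ) * (2 * (n : ℤ) - 2 * (m : ℤ) - 1)) r (by push_cast; ring)
      rw [sub_eq_zero, ← hcomb]
      ring
    refine ⟨key1, ?_⟩
    have hD : IsPolySeries
        ((1 - PowerSeries.C (R := ℂ) ((q : ℂ) ^ ((n : ℤ) * (2 * n - 2 * m - 1))) * PowerSeries.X) *
          (PowerSeries.C (R := ℂ) (a : ℂ) *
            PowerSeries.mk (fun r => if r = 0 then (0 : ℂ) else
              ((q : ℂ) ^ ((n : ℤ) * (2 * n - 2 * m - 1))) ^ r))) := by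
      apply isPoly_of_eventually_zero (N := 2)
      intro r hr
      obtain ⟨s, rfl⟩ : ∃ s, r = s + 1 := ⟨r - 1, by omega⟩
      have hs : s ≠ 0 := by omega
      have hexp : (1 - PowerSeries.C (R := ℂ) ((q : ℂ) ^ ((n : ℤ) * (2 * n - 2 * m - 1))) *
            PowerSeries.X) *
          (PowerSeries.C (R := ℂ) (a : ℂ) *
            PowerSeries.mk (fun r => if r = 0 then (0 : ℂ) else
              ((q : ℂ) ^ ((n : ℤ) * (2 * n - 2 * m - 1))) ^ r)) =
          PowerSeries.C (R := ℂ) (a : ℂ) *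
            PowerSeries.mk (fun r => if r = 0 then (0 : ℂ) else
              ((q : ℂ) ^ ((n : ℤ) * (2 * n - 2 * m - 1))) ^ r) -
          PowerSeries.C (R := ℂ) ((q : ℂ) ^ ((n : ℤ) * (2 * n - 2 * m - 1))) *
            (PowerSeries.X * (PowerSeries.C (R := ℂ) (a : ℂ) *
              PowerSeries.mk (fun r => if r = 0 then (0 : ℂ) else
                ((q : ℂ) ^ ((n : ℤ) * (2 * n - 2 * m - 1))) ^ r))) := by ring
      rw [hexp, map_sub]
      simp only [PowerSeries.coeff_C_mul, PowerSeries.coeff_succ_X_mul, PowerSeries.coeff_mk]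
      rw [if_neg hs, if_neg (Nat.succ_ne_zero s)]
      ring
    have hsplit : (1 - PowerSeries.C (R := ℂ) ((q : ℂ) ^ ((n : ℤ) * (2 * n - 2 * m - 1))) *
          PowerSeries.X) * Pgamma O ε πk q ψ A (LamSetExp ℓ γt 0) ℓ =
        (1 - PowerSeries.C (R := ℂ) ((q : ℂ) ^ ((n : ℤ) * (2 * n - 2 * m - 1))) * PowerSeries.X) *
          (Pgamma O ε πk q ψ A (LamSetExp ℓ γt 0) ℓ -
            PowerSeries.C (R := ℂ) (a : ℂ) *
              PowerSeries.mk (fun r => if r = 0 then (0 : ℂ) else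
                ((q : ℂ) ^ ((n : ℤ) * (2 * n - 2 * m - 1))) ^ r)) +
        (1 - PowerSeries.C (R := ℂ) ((q : ℂ) ^ ((n : ℤ) * (2 * n - 2 * m - 1))) * PowerSeries.X) *
          (PowerSeries.C (R := ℂ) (a : ℂ) *
            PowerSeries.mk (fun r => if r = 0 then (0 : ℂ) else
              ((q : ℂ) ^ ((n : ℤ) * (2 * n - 2 * m - 1))) ^ r)) := by ring
    rw [hsplit]
    refine isPoly_add' (isPoly_mul' ?_ key1) hD
    exact ⟨1 - Polynomial.C ((q : ℂ) ^ ((n : ℤ) * (2 * n - 2 * m - 1))) * Polynomial.X,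
      by push_cast; ring⟩
  · -- case 1 ≤ i
    intro hi1
    have hne : i ≠ 0 := by omega
    have hkey : ∀ j : Fin n, γt j = 2 * ℓ ↔ (j : ℕ) < i := by
      intro j
      constructor
      · intro hj
        have hsub : Finset.Iic j ⊆ Finset.univ.filter fun l => γt l = 2 * ℓ := by
          intro l hl
          simp only [Finset.mem_Iic] at hl
          have h1 : γt j ≤ γt l := hγt.1.1 hl
          have h2 : γt l ≤ 2 * ℓ := hγt.2 l
          simp only [Finset.mem_filter, Finset.mem_univ, true_and]
          omega
        have hc := Finset.card_le_card hsub
        rw [Fin.card_Iic] at hc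
        omega
      · intro hj
        by_contra hne2
        have hlt : γt j < 2 * ℓ := lt_of_le_of_ne (hγt.2 j) hne2
        have hsub : (Finset.univ.filter fun l => γt l = 2 * ℓ) ⊆ Finset.Iio j := by
          intro l hl
          simp only [Finset.mem_filter, Finset.mem_univ, true_and] at hl
          simp only [Finset.mem_Iio]
          by_contra hge
          push_neg at hge
          have := hγt.1.1 hge
          omega
        have hc := Finset.card_le_card hsub
        rw [Fin.card_Iio] at hc
        omega
    have hset : ∀ r : ℕ, LamSetExp ℓ γt i r =
        {γ | LamPLe (2 * (ℓ + r)) γ ∧ ∃ ρ : Fin i → ℕ, LamPLe (2 * r) ρ ∧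
          ∀ j : Fin n, (∀ hj : (j : ℕ) < i, γ j = 2 * ℓ + ρ ⟨j, hj⟩) ∧
            (i ≤ (j : ℕ) → γ j = γt j)} := by
      intro r; unfold LamSetExp; rw [if_neg hne]
    have hGmem : ∀ (r : ℕ) (ρ : Fin i → ℕ), LamPLe (2 * r) ρ →
        (fun j : Fin n => if hj : (j : ℕ) < i then 2 * ℓ + ρ ⟨j, hj⟩ else γt j) ∈
          LamSetExp ℓ γt i r := by
      intro r ρ hρ
      rw [hset r]
      refine ⟨⟨⟨?_, ?_⟩, ?_⟩, ρ, hρ, ?_⟩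
      · -- antitone
        intro j1 j2 h12
        have h12' : (j1 : ℕ) ≤ (j2 : ℕ) := h12
        dsimp only
        by_cases h1 : (j1 : ℕ) < i <;> by_cases h2 : (j2 : ℕ) < i
        · rw [dif_pos h1, dif_pos h2]
          have := hρ.1.1 (show (⟨(j1 : ℕ), h1⟩ : Fin i) ≤ ⟨(j2 : ℕ), h2⟩ from h12')
          omega
        · rw [dif_pos h1, dif_neg h2]
          have := hγt.2 j2
          omega
        · exact absurd h2 (by omega)
        · rw [dif_neg h1, dif_neg h2]
          exact hγt.1.1 h12
      · -- parity
        intro v hv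
        have hv2 : v ≠ 2 * ℓ := by rcases hv with ⟨k, hk⟩; omega
        have himg : (Finset.univ.filter fun j : Fin n =>
              (if hj : (j : ℕ) < i then 2 * ℓ + ρ ⟨j, hj⟩ else γt j) = v)
            = ((Finset.univ.filter fun j' : Fin i => 2 * ℓ + ρ j' = v).image
                (Fin.castLE hin)) ∪ (Finset.univ.filter fun j : Fin n => γt j = v) := by
          ext j
          simp only [Finset.mem_filter, Finset.mem_union, Finset.mem_image,
            Finset.mem_univ, true_and]
          constructor
          · intro hj
            by_cases h1 : (j : ℕ) < i
            · rw [dif_pos h1] at hj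
              exact Or.inl ⟨⟨(j : ℕ), h1⟩, hj, by ext; simp⟩
            · rw [dif_neg h1] at hj
              exact Or.inr hj
          · rintro (⟨j', hj', rfl⟩ | hj)
            · have hlt : ((Fin.castLE hin j' : Fin n) : ℕ) < i := by
                simpa using j'.isLt
              rw [dif_pos hlt]
              have hmk : (⟨((Fin.castLE hin j' : Fin n) : ℕ), hlt⟩ : Fin i) = j' := by
                ext; simp
              rw [hmk]; exact hj'
            · have hni : ¬ (j : ℕ) < i := by
                intro hlt
                have := (hkey j).mpr hlt
                omega
              rw [dif_neg hni]; exact hj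
        have hdisj : Disjoint
            ((Finset.univ.filter fun j' : Fin i => 2 * ℓ + ρ j' = v).image (Fin.castLE hin))
            (Finset.univ.filter fun j : Fin n => γt j = v) := by
          rw [Finset.disjoint_left]
          intro j hj1 hj2
          simp only [Finset.mem_image, Finset.mem_filter, Finset.mem_univ, true_and]
            at hj1 hj2
          obtain ⟨j', _, rfl⟩ := hj1
          have := (hkey _).mpr
            (show ((Fin.castLE hin j' : Fin n) : ℕ) < i by simpa using j'.isLt)
          omega
        dsimp only
        rw [himg, Finset.card_union_of_disjoint hdisj,
          Finset.card_image_of_injective _ (Fin.castLE_injective hin)]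
        refine Even.add ?_ (hγt.1.2 v hv)
        rcases le_or_gt (2 * ℓ) v with hle | hlt
        · have heq : (Finset.univ.filter fun j' : Fin i => 2 * ℓ + ρ j' = v)
              = Finset.univ.filter fun j' : Fin i => ρ j' = v - 2 * ℓ := by
            ext j'; simp only [Finset.mem_filter, Finset.mem_univ, true_and]; omega
          rw [heq]
          refine hρ.1.2 (v - 2 * ℓ) ?_
          rcases hv with ⟨k, hk⟩
          exact ⟨k - ℓ, by omega⟩
        · have heq : (Finset.univ.filter fun j' : Fin i => 2 * ℓ + ρ j' = v) = ∅ := by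
            ext j'
            simp only [Finset.mem_filter, Finset.mem_univ, true_and,
              Finset.notMem_empty, iff_false]
            omega
          rw [heq]; simp
      · -- bound
        intro j
        dsimp only
        by_cases h1 : (j : ℕ) < i
        · rw [dif_pos h1]; have := hρ.2 ⟨(j : ℕ), h1⟩; omega
        · rw [dif_neg h1]; have := hγt.2 j; omega
      · -- the congruence conditions
        intro j
        refine ⟨fun hj => ?_, fun hj => ?_⟩
        · dsimp only; rw [dif_pos hj]
        · dsimp only; rw [dif_neg (by omega)]
    have hρmem : ∀ (r : ℕ) (γ : Fin n → ℕ), γ ∈ LamSetExp ℓ γt i r →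
        LamPLe (2 * r) (fun j : Fin i => γ (Fin.castLE hin j) - 2 * ℓ) := by
      intro r γ hγ
      rw [hset r] at hγ
      obtain ⟨hL, ρ', hρ', hcond⟩ := hγ
      have heq : (fun j : Fin i => γ (Fin.castLE hin j) - 2 * ℓ) = ρ' := by
        funext j
        have h1 := (hcond (Fin.castLE hin j)).1 (by simpa using j.isLt)
        simp only [Fin.coe_castLE, Fin.eta] at h1
        omega
      rw [heq]; exact hρ'
    apply isPoly_of_eventually_zero (N := r₀ + 1)
    intro r hr
    have hrne : r ≠ 0 := by omega
    have hr0 : r₀ ≤ r := by omega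
    simp only [map_sub, PowerSeries.coeff_C_mul, Pgamma, PowerSeries.coeff_mk,
      Fintype.card_fin, if_neg hrne]
    have hterm : ∀ γ : (LamSetExp ℓ γt i r),
        ratioSN O ε πk ψ A γ.1 (ℓ + r) =
          ((a : ℂ) * (q : ℂ) ^ ((r : ℤ) * ((n : ℤ) - i) * (2 * m - 2 * n - 2 * i - 1))) *
            ratioSN O ε πk ψ A (fun j : Fin i => γ.1 (Fin.castLE hin j) - 2 * ℓ) r :=
      fun γ => (ha r hr0 γ.1 γ.2).2 hi1
    have hS : ∑' γ : (LamSetExp ℓ γt i r),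
        ratioSN O ε πk ψ A (fun j : Fin i => γ.1 (Fin.castLE hin j) - 2 * ℓ) r
          = ∑' ρ : {ρ : Fin i → ℕ // LamPLe (2 * r) ρ}, ratioSN O ε πk ψ A ρ.1 r := by
      refine Equiv.tsum_eq
        (⟨fun γ => ⟨fun j => γ.1 (Fin.castLE hin j) - 2 * ℓ, hρmem r γ.1 γ.2⟩,
          fun ρ => ⟨fun j => if hj : (j : ℕ) < i then 2 * ℓ + ρ.1 ⟨j, hj⟩ else γt j,
            hGmem r ρ.1 ρ.2⟩, ?_, ?_⟩ :
          (LamSetExp ℓ γt i r).Elem ≃ {ρ : Fin i → ℕ // LamPLe (2 * r) ρ})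
        (fun ρ => ratioSN O ε πk ψ A ρ.1 r)
      · intro γ
        apply Subtype.ext
        funext j
        obtain ⟨hL, ρ', hρ', hcond⟩ := (Set.ext_iff.mp (hset r) γ.1).mp γ.2
        dsimp only
        by_cases h1 : (j : ℕ) < i
        · rw [dif_pos h1]
          have h2 := (hcond j).1 h1
          have h3 : Fin.castLE hin (⟨(j : ℕ), h1⟩ : Fin i) = j := by ext; simp
          rw [h3]
          omega
        · rw [dif_neg h1]
          exact ((hcond j).2 (by omega)).symm
      · intro ρ
        apply Subtype.ext
        funext j
        dsimp only
        have hlt : ((Fin.castLE hin j : Fin n) : ℕ) < i := by simpa using j.isLt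
        rw [dif_pos hlt]
        simp only [Fin.coe_castLE, Fin.eta]
        omega
    rw [tsum_congr hterm, tsum_mul_left, hS]
    have hcomb := zpow_pow_combine hq0 (4 * (n : ℤ) * ((n : ℤ) - (m : ℤ)))
      ((r : ℤ) * ((n : ℤ) - (i : ℤ)) * (2 * (m : ℤ) - 2 * (n : ℤ) - 2 * (i : ℤ) - 1))
      ((n : ℤ) * (2 * (n : ℤ) - 2 * (m : ℤ) - 1) +
        (i : ℤ) * (2 * (i : ℤ) - 2 * (m : ℤ) + 1)) r (by push_cast; ring)
    rw [sub_eq_zero, ← hcomb]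
    ring
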